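/- Fix λ > 0, d₁ > 0, d₂ > 0, a > 0, w_o > 0, a constant G₃ > 0, and angles θ_i, θ_r with sin θ_i > 0 and sin θ_r > 0. Let w₁ = λ d₁/(π w_o), define G₂(Σ) = (4π Σ sin θ_i / λ²) · g_LS with g_LS = 2π w_o²/(4π d₁²), and set S₁ = λ² d₂²/(π a² sin θ_r) and S₂ = π G₃ w₁² / (2 sin θ_i). Then: (i) for every Σ > 0, G₂(Σ) ≤ G₃ if and only if Σ ≤ S₂, with equality if and only if Σ = S₂; and (ii) S₁ ≤ S₂ if and only if G₃ ≥ 2 d₂² w_o² sin θ_i / (d₁² a² sin θ_r). -/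

import Mathlib

/-!
Both boundaries come from the fact that in the linear regime the IRS collects the fraction
`2 Σ sin θi / (π w₁²)` of the incident Gaussian beam (its projected area against the beam area
`π w₁² / 2`), so `G₂` is linear in `Σ` with a positive slope `k`. Then `S₂ = G₃ / k` is where
the line reaches `G₃`, and `S₁ ≤ S₂` is `S₁ k ≤ G₃`, where `S₁ k` simplifies to the threshold.
-/

open Real

theorem linearGain_eq_mul_slope (lam d₁ w_o s Sig : ℝ) :
    4 * π * Sig * s / lam ^ 2 * (2 * π * w_o ^ 2 / (4 * π * d₁ ^ 2)) =
      Sig * (2 * s / (π * (lam * d₁ / (π * w_o)) ^ 2)) := by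
  field_simp [pi_ne_zero]

theorem surfaceS₁_mul_slope {lam : ℝ} (hlam : lam ≠ 0) (d₁ d₂ a w_o sᵢ sᵣ : ℝ) :
    lam ^ 2 * d₂ ^ 2 / (π * a ^ 2 * sᵣ) * (2 * sᵢ / (π * (lam * d₁ / (π * w_o)) ^ 2)) =
      2 * d₂ ^ 2 * w_o ^ 2 * sᵢ / (d₁ ^ 2 * a ^ 2 * sᵣ) := by
  field_simp [pi_ne_zero]

theorem boundary_S2 (lam d₁ d₂ a w_o G₃ θi θr : ℝ)
    (hlam : 0 < lam) (hd₁ : 0 < d₁) (hwo : 0 < w_o)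
    (hθi : 0 < Real.sin θi)
    (w₁ g_LS S₁ S₂ : ℝ) (G₂ : ℝ → ℝ)
    (hw₁ : w₁ = lam * d₁ / (π * w_o))
    (hgLS : g_LS = 2 * π * w_o ^ 2 / (4 * π * d₁ ^ 2))
    (hG₂ : ∀ Sig, G₂ Sig = 4 * π * Sig * Real.sin θi / lam ^ 2 * g_LS)
    (hS₁ : S₁ = lam ^ 2 * d₂ ^ 2 / (π * a ^ 2 * Real.sin θr))
    (hS₂ : S₂ = π * G₃ * w₁ ^ 2 / (2 * Real.sin θi)) :
    (∀ Sig : ℝ, 0 < Sig →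
      (G₂ Sig ≤ G₃ ↔ Sig ≤ S₂) ∧ (G₂ Sig = G₃ ↔ Sig = S₂)) ∧
    (S₁ ≤ S₂ ↔ G₃ ≥ 2 * d₂ ^ 2 * w_o ^ 2 * Real.sin θi / (d₁ ^ 2 * a ^ 2 * Real.sin θr)) := by
  subst hw₁ hgLS
  set k := 2 * Real.sin θi / (π * (lam * d₁ / (π * w_o)) ^ 2)
  have hk : 0 < k := by positivity
  have hG₂k : ∀ Sig, G₂ Sig = Sig * k := fun Sig => by
    rw [hG₂, linearGain_eq_mul_slope]
  have hS₂k : S₂ = G₃ / k := by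
    rw [hS₂, div_div_eq_mul_div]; ring
  have hS₁k : S₁ * k = 2 * d₂ ^ 2 * w_o ^ 2 * Real.sin θi / (d₁ ^ 2 * a ^ 2 * Real.sin θr) := by
    rw [hS₁, surfaceS₁_mul_slope hlam.ne']
  refine ⟨fun Sig _ => ⟨?_, ?_⟩, ?_⟩
  · rw [hG₂k, hS₂k, le_div_iff₀ hk]
  · rw [hG₂k, hS₂k, eq_div_iff hk.ne']
  · rw [hS₂k, le_div_iff₀ hk, hS₁k, ge_iff_le]
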